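/- arXiv:2411.01843 — 10 statements merged into one kernel-verified Lean document; each statement's English description precedes it below -/
import Mathlib

section
/- Let N ≥ 2, n ≥ 2, M ≥ 1 be integers and let K be an integer with 1 ≤ K ≤ n. For an integer R with 1 ≤ R ≤ N, define p(R) to be the probability that a Binomial(n−1, (R−1)/(N−1)) random variable is at most K−1 (that is, the probability that the sampled rank r = 1 + X with X ~ Binomial(n−1,(R−1)/(N−1)) satisfies r ≤ K). Suppose R⁽¹⁾, R⁽²⁾ : Fin M → {1,…,N} are two rank assignments such that for every threshold t ∈ {1,…,N}, the number of users u with R⁽¹⁾(u) ≤ t is at least the number of users u with R⁽²⁾(u) ≤ t. Then ∑_{u} p(R⁽¹⁾(u)) ≥ ∑_{u} p(R⁽²⁾(u)); equivalently, the expected item-sampling top-K Recall under the first rank assignment is at least that under the second. -/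
open Finset

/-- Probability that a `Binomial(n-1, (R-1)/(N-1))` random variable is at most `K-1`,
i.e. that the sampled rank `r = 1 + X` satisfies `r ≤ K`. -/
noncomputable def sampledRecallProb (n K N R : ℕ) : ℝ :=
  ∑ l ∈ Finset.range K,
    ((n - 1).choose l : ℝ) * (((R : ℝ) - 1) / ((N : ℝ) - 1)) ^ l *
      (1 - ((R : ℝ) - 1) / ((N : ℝ) - 1)) ^ (n - 1 - l)

/-- Binomial CDF: probability that `Binomial(m, x)` is `< K`. -/
noncomputable def binCDF (m K : ℕ) (x : ℝ) : ℝ :=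
  ∑ l ∈ Finset.range K, (m.choose l : ℝ) * x ^ l * (1 - x) ^ (m - l)

lemma choose_id1 (m K : ℕ) : (K + 1) * m.choose (K + 1) = m * (m - 1).choose K := by
  cases m with
  | zero => simp [Nat.choose_eq_zero_of_lt (Nat.succ_pos K)]
  | succ m' =>
    simp only [Nat.succ_eq_add_one, Nat.add_sub_cancel]
    rw [mul_comm]
    exact (Nat.add_one_mul_choose_eq m' K).symm

lemma choose_id2 (m K : ℕ) : (m - (K + 1)) * m.choose (K + 1) = m * (m - 1).choose (K + 1) := by
  cases m with
  | zero => simp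
  | succ m' =>
    simp only [Nat.succ_eq_add_one, Nat.add_sub_cancel]
    rw [mul_comm, ← Nat.choose_mul_succ_eq, mul_comm]

lemma binCDF_hasDerivAt (m K : ℕ) (x : ℝ) :
    HasDerivAt (binCDF m (K + 1))
      (-((m : ℝ) * ((m - 1).choose K : ℝ) * x ^ K * (1 - x) ^ (m - 1 - K))) x := by
  induction K with
  | zero =>
    have h : binCDF m 1 = fun y : ℝ => (1 - y) ^ m := by
      funext y; simp [binCDF]
    rw [h]
    have h2 : HasDerivAt (fun y : ℝ => (1 - y) ^ m) ((m : ℝ) * (1 - x) ^ (m - 1) * (-1)) x :=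
      ((hasDerivAt_id x).const_sub 1).pow m
    convert h2 using 1
    simp
  | succ K ih =>
    have hterm :
        HasDerivAt
          (fun y : ℝ => (m.choose (K + 1) : ℝ) * y ^ (K + 1) * (1 - y) ^ (m - (K + 1)))
          ((m.choose (K + 1) : ℝ) * (((K + 1 : ℕ) : ℝ) * x ^ K) * (1 - x) ^ (m - (K + 1))
            + (m.choose (K + 1) : ℝ) * x ^ (K + 1)
              * (((m - (K + 1) : ℕ) : ℝ) * (1 - x) ^ (m - (K + 1) - 1) * (-1))) x := by
      have h1 : HasDerivAt (fun y : ℝ => (m.choose (K + 1) : ℝ) * y ^ (K + 1))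
          ((m.choose (K + 1) : ℝ) * (((K + 1 : ℕ) : ℝ) * x ^ K)) x := by
        have := (hasDerivAt_pow (K + 1) x).const_mul (m.choose (K + 1) : ℝ)
        simpa using this
      have h2 : HasDerivAt (fun y : ℝ => (1 - y) ^ (m - (K + 1)))
          (((m - (K + 1) : ℕ) : ℝ) * (1 - x) ^ (m - (K + 1) - 1) * (-1)) x :=
        ((hasDerivAt_id x).const_sub 1).pow (m - (K + 1))
      exact h1.mul h2
    have hsum : binCDF m (K + 2)
        = fun y : ℝ => binCDF m (K + 1) y
            + (m.choose (K + 1) : ℝ) * y ^ (K + 1) * (1 - y) ^ (m - (K + 1)) := by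
      funext y; simp [binCDF, Finset.sum_range_succ]
    rw [hsum]
    refine HasDerivAt.congr_deriv (ih.add hterm) (Eq.symm ?_)
    have e1 : m - (K + 1) = m - 1 - K := by omega
    have e2 : m - (K + 1) - 1 = m - 1 - (K + 1) := by omega
    have c1 : (((K + 1 : ℕ)) : ℝ) * (m.choose (K + 1) : ℝ)
        = (m : ℝ) * ((m - 1).choose K : ℝ) := by
      exact_mod_cast congrArg (Nat.cast : ℕ → ℝ) (choose_id1 m K)
    have c2 : (((m - (K + 1) : ℕ)) : ℝ) * (m.choose (K + 1) : ℝ)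
        = (m : ℝ) * ((m - 1).choose (K + 1) : ℝ) := by
      exact_mod_cast congrArg (Nat.cast : ℕ → ℝ) (choose_id2 m K)
    rw [e1] at c2
    rw [e2, e1]
    linear_combination (x ^ (K + 1) * (1 - x) ^ (m - 1 - (K + 1))) * c2
      - (x ^ K * (1 - x) ^ (m - 1 - K)) * c1

lemma binCDF_antitoneOn (m K : ℕ) : AntitoneOn (binCDF m (K + 1)) (Set.Icc (0 : ℝ) 1) := by
  apply antitoneOn_of_deriv_nonpos (convex_Icc 0 1)
  · apply Continuous.continuousOn
    apply continuous_finset_sum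
    intro l _
    continuity
  · intro x _
    exact (binCDF_hasDerivAt m K x).differentiableAt.differentiableWithinAt
  · intro x hx
    rw [interior_Icc] at hx
    rw [(binCDF_hasDerivAt m K x).deriv]
    have h1 : (0 : ℝ) ≤ x ^ K := pow_nonneg (le_of_lt hx.1) K
    have h2 : (0 : ℝ) ≤ (1 - x) ^ (m - 1 - K) := pow_nonneg (by linarith [hx.2]) _
    have h3 : (0 : ℝ) ≤ (m : ℝ) * ((m - 1).choose K : ℝ) := by positivity
    have := mul_nonneg (mul_nonneg h3 h1) h2
    linarith

lemma sampledRecallProb_eq (n K N R : ℕ) :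
    sampledRecallProb n K N R = binCDF (n - 1) K (((R : ℝ) - 1) / ((N : ℝ) - 1)) := rfl

lemma prob_mono (n K N : ℕ) (hN : 2 ≤ N) (hK : 1 ≤ K) (R R' : ℕ)
    (h1 : 1 ≤ R) (h2 : R ≤ R') (h3 : R' ≤ N) :
    sampledRecallProb n K N R' ≤ sampledRecallProb n K N R := by
  obtain ⟨K', rfl⟩ : ∃ K', K = K' + 1 := ⟨K - 1, by omega⟩
  rw [sampledRecallProb_eq, sampledRecallProb_eq]
  have hNpos : (0 : ℝ) < (N : ℝ) - 1 := by
    have : (2 : ℝ) ≤ (N : ℝ) := by exact_mod_cast hN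
    linarith
  have hR1 : (1 : ℝ) ≤ (R : ℝ) := by exact_mod_cast h1
  have hRR : (R : ℝ) ≤ (R' : ℝ) := by exact_mod_cast h2
  have hRN : (R' : ℝ) ≤ (N : ℝ) := by exact_mod_cast h3
  have hx : ((R : ℝ) - 1) / ((N : ℝ) - 1) ∈ Set.Icc (0 : ℝ) 1 := by
    constructor
    · apply div_nonneg <;> linarith
    · rw [div_le_one hNpos]; linarith
  have hy : ((R' : ℝ) - 1) / ((N : ℝ) - 1) ∈ Set.Icc (0 : ℝ) 1 := by
    constructor
    · apply div_nonneg <;> linarith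
    · rw [div_le_one hNpos]; linarith
  have hxy : ((R : ℝ) - 1) / ((N : ℝ) - 1) ≤ ((R' : ℝ) - 1) / ((N : ℝ) - 1) := by
    rw [div_le_div_iff₀ hNpos hNpos]
    nlinarith
  exact binCDF_antitoneOn (n - 1) K' hx hy hxy

theorem sampling_theorem
    (N n M K : ℕ) (hN : 2 ≤ N) (hn : 2 ≤ n) (hM : 1 ≤ M)
    (hK1 : 1 ≤ K) (hKn : K ≤ n)
    (R₁ R₂ : Fin M → ℕ)
    (hR₁ : ∀ u, 1 ≤ R₁ u ∧ R₁ u ≤ N)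
    (hR₂ : ∀ u, 1 ≤ R₂ u ∧ R₂ u ≤ N)
    (hdom : ∀ t, 1 ≤ t → t ≤ N →
      (Finset.univ.filter fun u => R₂ u ≤ t).card ≤
        (Finset.univ.filter fun u => R₁ u ≤ t).card) :
    ∑ u, sampledRecallProb n K N (R₂ u) ≤ ∑ u, sampledRecallProb n K N (R₁ u) := by
  set P : ℕ → ℝ := fun t => sampledRecallProb n K N t with hP
  have key : ∀ (R : Fin M → ℕ), (∀ u, 1 ≤ R u ∧ R u ≤ N) →
      ∑ u, P (R u)
        = (M : ℝ) * P N
          + ∑ t ∈ Finset.Ico 1 N, (P t - P (t + 1))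
              * ((Finset.univ.filter fun u => R u ≤ t).card : ℝ) := by
    intro R hR
    have hpt : ∀ u : Fin M, P (R u)
        = P N + ∑ t ∈ Finset.Ico 1 N, (if R u ≤ t then P t - P (t + 1) else 0) := by
      intro u
      obtain ⟨h1, h2⟩ := hR u
      have hfilt : (Finset.Ico 1 N).filter (fun t => R u ≤ t) = Finset.Ico (R u) N := by
        ext t
        simp only [Finset.mem_filter, Finset.mem_Ico]
        omega
      rw [← Finset.sum_filter, hfilt, Finset.sum_Ico_eq_sum_range]
      have htel : ∑ k ∈ Finset.range (N - R u), (P (R u + k) - P (R u + k + 1))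
          = P (R u + 0) - P (R u + (N - R u)) :=
        Finset.sum_range_sub' (fun k => P (R u + k)) (N - R u)
      have : R u + (N - R u) = N := by omega
      rw [htel, this] at *
      simp
    calc ∑ u, P (R u)
        = ∑ u : Fin M, (P N + ∑ t ∈ Finset.Ico 1 N, (if R u ≤ t then P t - P (t + 1) else 0)) := by
          exact Finset.sum_congr rfl (fun u _ => hpt u)
      _ = (M : ℝ) * P N
          + ∑ t ∈ Finset.Ico 1 N, (P t - P (t + 1))
              * ((Finset.univ.filter fun u => R u ≤ t).card : ℝ) := by
          rw [Finset.sum_add_distrib, Finset.sum_const, Finset.card_univ, Fintype.card_fin,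
            nsmul_eq_mul, Finset.sum_comm]
          congr 1
          apply Finset.sum_congr rfl
          intro t _
          rw [← Finset.sum_filter, Finset.sum_const, nsmul_eq_mul, mul_comm]
  rw [show (∑ u, sampledRecallProb n K N (R₂ u)) = ∑ u, P (R₂ u) from rfl,
    show (∑ u, sampledRecallProb n K N (R₁ u)) = ∑ u, P (R₁ u) from rfl,
    key R₁ hR₁, key R₂ hR₂]
  apply add_le_add_right
  apply Finset.sum_le_sum
  intro t ht
  rw [Finset.mem_Ico] at ht
  have hc : 0 ≤ P t - P (t + 1) :=
    sub_nonneg.mpr (prob_mono n K N hN hK1 t (t + 1) ht.1 (by omega) (by omega))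
  have hcard : ((Finset.univ.filter fun u => R₂ u ≤ t).card : ℝ)
      ≤ ((Finset.univ.filter fun u => R₁ u ≤ t).card : ℝ) := by
    exact_mod_cast hdom t ht.1 (by omega)
  exact mul_le_mul_of_nonneg_left hcard hc
end

section
/- (Location of Last Point) Fix a real number a > 0 and integers n ≥ 2 and N ≥ 2. Define f : {1,…,n} → ℝ recursively by f(1) = (N−1)·(a·B(a,n))^{1/a} + 1 and, for 1 ≤ k ≤ n−1, f(k+1) = ( a·(N−1)^a · C(n−1,k) · B(a+k, n−k) + (f(k)−1)^a )^{1/a} + 1, where powers are real powers. Then f(k) − 1 ≥ 0 for all k, and f(n) = N. -/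
noncomputable def betaFn (x y : ℝ) : ℝ := Real.Gamma x * Real.Gamma y / Real.Gamma (x + y)

open Finset

lemma gamma_sum_eq (a : ℝ) (ha : 0 < a) (m : ℕ) :
    a * ∑ j ∈ range (m + 1), ((m.factorial : ℝ) / (j.factorial : ℝ)) * Real.Gamma (a + j)
      = Real.Gamma (a + m + 1) := by
  induction m with
  | zero =>
      simp only [Nat.cast_zero, add_zero, Nat.factorial_zero, range_one, sum_singleton,
        Nat.cast_one]
      rw [Real.Gamma_add_one ha.ne']
      simp
  | succ m ih =>
      rw [sum_range_succ]
      have h1 : ∀ j ∈ range (m+1), ((m+1).factorial : ℝ)/(j.factorial : ℝ) * Real.Gamma (a+j)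
          = (m+1) * (((m.factorial : ℝ)/(j.factorial : ℝ)) * Real.Gamma (a+j)) := by
        intro j _
        rw [Nat.factorial_succ]
        push_cast
        ring
      rw [sum_congr rfl h1, ← mul_sum]
      have hfac : (((m+1).factorial : ℝ)/((m+1).factorial : ℝ)) = 1 :=
        div_self (by exact_mod_cast (Nat.factorial_pos (m+1)).ne')
      rw [hfac]
      have e1 : a + ((m+1 : ℕ) : ℝ) = a + m + 1 := by push_cast; ring
      rw [e1]
      have h2 : Real.Gamma (a + ↑m + 1 + 1) = (a + ↑m + 1) * Real.Gamma (a + ↑m + 1) := by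
        rw [Real.Gamma_add_one (by positivity)]
      rw [h2]
      linear_combination (↑m + 1) * ih

/-- (Location of Last Point) The Beta-distribution-based mapping function `f`
satisfies `f k ≥ 1` on `{1,…,n}` and sends the last sampling position `n`
to the last global position `N`. -/
theorem location_of_last_point (a : ℝ) (ha : 0 < a) (n N : ℕ) (hn : 2 ≤ n) (hN : 2 ≤ N)
    (f : ℕ → ℝ)
    (hf1 : f 1 = ((N : ℝ) - 1) * (a * betaFn a n) ^ (1 / a) + 1)
    (hfk : ∀ k, 1 ≤ k → k ≤ n - 1 →
      f (k + 1) =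
        (a * ((N : ℝ) - 1) ^ a * ((n - 1).choose k : ℝ) * betaFn (a + k) ((n : ℝ) - k)
            + (f k - 1) ^ a) ^ (1 / a) + 1) :
    (∀ k, 1 ≤ k → k ≤ n → 0 ≤ f k - 1) ∧ f n = N := by
  have hNpos : (0:ℝ) ≤ (N:ℝ) - 1 := by
    have : (2:ℝ) ≤ N := by exact_mod_cast hN
    linarith
  set S : ℕ → ℝ := fun k => ∑ j ∈ range k, (((n-1).choose j : ℝ)) * betaFn (a + j) ((n:ℝ) - j)
    with hSdef
  -- each term in S is nonnegative (for j < n)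
  have hterm : ∀ j, j < n → 0 ≤ (((n-1).choose j : ℝ)) * betaFn (a + j) ((n:ℝ) - j) := by
    intro j hj
    apply mul_nonneg (by positivity)
    have h1 : 0 < Real.Gamma (a + j) := Real.Gamma_pos_of_pos (by positivity)
    have hj' : (j:ℝ) + 1 ≤ n := by exact_mod_cast hj
    have h2 : 0 < Real.Gamma ((n:ℝ) - j) := Real.Gamma_pos_of_pos (by linarith)
    have h3 : 0 < Real.Gamma (a + j + ((n:ℝ) - j)) := Real.Gamma_pos_of_pos (by linarith)
    unfold betaFn
    positivity
  have hSnonneg : ∀ k, k ≤ n → 0 ≤ S k := by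
    intro k hk
    apply Finset.sum_nonneg
    intro j hj
    exact hterm j (lt_of_lt_of_le (mem_range.mp hj) hk)
  -- closed form for f
  have hform : ∀ k, 1 ≤ k → k ≤ n → f k - 1 = ((N:ℝ) - 1) * (a * S k) ^ (1/a) := by
    intro k
    induction k with
    | zero => intro h; omega
    | succ k ih =>
      intro _ hkn
      rcases Nat.eq_zero_or_pos k with hk0 | hkpos
      · subst hk0
        have hS1 : S 1 = betaFn a n := by
          simp [hSdef, betaFn]
        rw [hf1, hS1]
        ring
      · have hk1 : 1 ≤ k := hkpos
        have hkn' : k ≤ n - 1 := by omega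
        have hkn'' : k ≤ n := by omega
        have ihk := ih hk1 hkn''
        have hSk : 0 ≤ a * S k := mul_nonneg ha.le (hSnonneg k hkn'')
        have hpow : (f k - 1) ^ a = ((N:ℝ) - 1) ^ a * (a * S k) := by
          rw [ihk, Real.mul_rpow hNpos (Real.rpow_nonneg hSk _), one_div,
            Real.rpow_inv_rpow hSk ha.ne']
        rw [hfk k hk1 hkn', hpow]
        have hB : 0 ≤ (((n-1).choose k : ℝ)) * betaFn (a + k) ((n:ℝ) - k) :=
          hterm k (by omega)
        have hSsucc : S (k+1) = S k + (((n-1).choose k : ℝ)) * betaFn (a + k) ((n:ℝ) - k) := by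
          simp [hSdef, sum_range_succ]
        have harg : a * ((N:ℝ) - 1) ^ a * ((n - 1).choose k : ℝ) * betaFn (a + k) ((n:ℝ) - k)
            + ((N:ℝ) - 1) ^ a * (a * S k) = ((N:ℝ) - 1) ^ a * (a * S (k+1)) := by
          rw [hSsucc]; ring
        rw [harg, Real.mul_rpow (Real.rpow_nonneg hNpos _)
            (mul_nonneg ha.le (hSnonneg (k+1) hkn)), one_div,
          Real.rpow_rpow_inv hNpos ha.ne']
        ring
  -- the key identity a * S n = 1
  have hSn : a * S n = 1 := by
    obtain ⟨m, rfl⟩ : ∃ m, n = m + 1 := ⟨n - 1, by omega⟩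
    have hGpos : 0 < Real.Gamma (a + ↑m + 1) := Real.Gamma_pos_of_pos (by positivity)
    have hcongr : ∀ j ∈ range (m+1),
        ((m.choose j : ℝ)) * betaFn (a + j) (((m+1 : ℕ):ℝ) - j)
          = (((m.factorial : ℝ) / (j.factorial : ℝ)) * Real.Gamma (a + j))
              / Real.Gamma (a + ↑m + 1) := by
      intro j hj
      have hjm : j ≤ m := by simpa [Nat.lt_succ_iff] using mem_range.mp hj
      have e1 : (((m+1 : ℕ):ℝ)) - j = ((m - j : ℕ) : ℝ) + 1 := by
        have : ((m - j : ℕ) : ℝ) = (m : ℝ) - j := by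
          push_cast [hjm]; ring
        rw [this]; push_cast; ring
      have e2 : Real.Gamma (((m+1 : ℕ):ℝ) - j) = ((m - j).factorial : ℝ) := by
        rw [e1, Real.Gamma_nat_eq_factorial]
      have e3 : a + ↑j + (((m+1 : ℕ):ℝ) - j) = a + ↑m + 1 := by push_cast; ring
      have e4 : (m.choose j : ℝ) * ((m - j).factorial : ℝ)
          = (m.factorial : ℝ) / (j.factorial : ℝ) := by
        have h := Nat.choose_mul_factorial_mul_factorial hjm
        have hj0 : (j.factorial : ℝ) ≠ 0 := by exact_mod_cast (Nat.factorial_pos j).ne'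
        have h' : (m.choose j * (m-j).factorial * j.factorial : ℕ) = m.factorial := by
          rw [← h]; ring
        rw [eq_div_iff hj0]
        exact_mod_cast h'
      rw [betaFn, e3, e2, ← e4]
      ring
    rw [hSdef]
    simp only [Nat.add_sub_cancel]
    rw [sum_congr rfl hcongr, ← sum_div, mul_div_assoc', gamma_sum_eq a ha m,
      div_self hGpos.ne']
  constructor
  · intro k hk1 hkn
    rw [hform k hk1 hkn]
    exact mul_nonneg hNpos (Real.rpow_nonneg (mul_nonneg ha.le (hSnonneg k hkn)) _)
  · have h := hform n (by omega) le_rfl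
    rw [hSn] at h
    rw [Real.one_rpow, mul_one] at h
    linarith
end

section
/- (Linear map for the uniform case) Fix integers n ≥ 2 and N ≥ 2 and set a = 1. Define f : {1,…,n} → ℝ recursively by f(1) = (N−1)·B(1,n) + 1 and, for 1 ≤ k ≤ n−1, f(k+1) = (N−1)·C(n−1,k)·B(1+k, n−k) + f(k). Then for every k ∈ {1,…,n}, f(k) = k·(N−1)/n + 1. -/
lemma gamma_nat_pred (m : ℕ) (hm : 1 ≤ m) :
    Real.Gamma (m : ℝ) = ((m - 1).factorial : ℝ) := by
  have h : (m : ℝ) = ((m - 1 : ℕ) : ℝ) + 1 := by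
    have : m - 1 + 1 = m := by omega
    rw [← this]; push_cast; ring
  rw [h, Real.Gamma_nat_eq_factorial]

lemma beta_step (n k : ℕ) (hn : 2 ≤ n) (hk : k ≤ n - 1) :
    ((n - 1).choose k : ℝ) * betaFn (1 + k) ((n : ℝ) - k) = 1 / n := by
  have hkn : k ≤ n := le_trans hk (Nat.sub_le n 1)
  have h1 : (1 + (k : ℝ)) = ((k : ℝ) + 1) := by ring
  have h2 : ((n : ℝ) - k) = (((n - k - 1 : ℕ) : ℝ) + 1) := by
    have hh : n - k - 1 + 1 = n - k := by omega
    have : (((n - k : ℕ)) : ℝ) = (n : ℝ) - k := by push_cast [hkn]; ring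
    rw [← this, ← hh]; push_cast; ring
  have h3 : (((k : ℝ) + 1) + (((n - k - 1 : ℕ) : ℝ) + 1)) = ((n : ℝ) + 1) := by
    have : (((n - k - 1 : ℕ)) : ℝ) = (n : ℝ) - k - 1 := by linarith [h2]
    rw [this]; ring
  unfold betaFn
  rw [h1, h2, h3, Real.Gamma_nat_eq_factorial, Real.Gamma_nat_eq_factorial,
    Real.Gamma_nat_eq_factorial]
  have key : ((n - 1).choose k * k.factorial * (n - 1 - k).factorial : ℕ)
      = (n - 1).factorial := Nat.choose_mul_factorial_mul_factorial hk
  have hnk : n - 1 - k = n - k - 1 := by omega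
  rw [hnk] at key
  have hfac : (n : ℕ).factorial = n * (n - 1).factorial := by
    have := Nat.mul_factorial_pred (show n ≠ 0 by omega)
    omega
  have keyR : ((n - 1).choose k : ℝ) * (k.factorial : ℝ) * ((n - k - 1).factorial : ℝ)
      = ((n - 1).factorial : ℝ) := by exact_mod_cast key
  have hfacR : ((n : ℕ).factorial : ℝ) = (n : ℝ) * ((n - 1).factorial : ℝ) := by
    exact_mod_cast hfac
  have hne : ((n : ℕ).factorial : ℝ) ≠ 0 := by positivity
  have hnne : (n : ℝ) ≠ 0 := by positivity
  field_simp [hfacR]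
  nlinarith [keyR]

/-- (Linear map for the uniform case) For `a = 1`, the mapping-function
recurrence gives exactly the linear map `f k = k(N-1)/n + 1`. -/
theorem mapping_function_linear_uniform_case (n N : ℕ) (hn : 2 ≤ n) (hN : 2 ≤ N)
    (f : ℕ → ℝ)
    (hf1 : f 1 = ((N : ℝ) - 1) * betaFn 1 n + 1)
    (hfk : ∀ k, 1 ≤ k → k ≤ n - 1 →
      f (k + 1) = ((N : ℝ) - 1) * ((n - 1).choose k : ℝ) * betaFn (1 + k) ((n : ℝ) - k) + f k) :
    ∀ k, 1 ≤ k → k ≤ n → f k = k * ((N : ℝ) - 1) / n + 1 := by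
  have hnne : (n : ℝ) ≠ 0 := by positivity
  intro k hk1 hkn
  induction k, hk1 using Nat.le_induction with
  | base =>
    have hb : betaFn 1 (n : ℝ) = 1 / n := by
      unfold betaFn
      have h1 : ((1 : ℝ) + n) = ((n : ℝ) + 1) := by ring
      rw [Real.Gamma_one, h1, Real.Gamma_nat_eq_factorial,
        gamma_nat_pred n (by omega)]
      have hfac : (n : ℕ).factorial = n * (n - 1).factorial := by
        have := Nat.mul_factorial_pred (show n ≠ 0 by omega)
        omega
      have hfacR : ((n : ℕ).factorial : ℝ) = (n : ℝ) * ((n - 1).factorial : ℝ) := by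
        exact_mod_cast hfac
      have hfne : ((n - 1).factorial : ℝ) ≠ 0 := by positivity
      rw [hfacR]
      field_simp
    rw [hf1, hb]
    push_cast
    ring
  | succ k hk ih =>
    have hkle : k ≤ n - 1 := by omega
    have := hfk k hk hkle
    rw [mul_assoc] at this
    rw [this, beta_step n k hn hkle, ih (by omega)]
    push_cast
    field_simp
    ring
end

section
/- Let m, n ≥ 1, let U ∈ ℝ^{m×n} have orthonormal columns (UᵀU = I_n), let V ∈ ℝ^{n×n} be orthogonal (VᵀV = I_n), let σ : Fin n → ℝ with σ_i ≥ 0, and let λ : Fin n → ℝ with σ_i² + λ_i > 0 for all i. Set X = U·diag(σ)·Vᵀ and Λ = diag(λ). Then XᵀX + VΛVᵀ is invertible and (XᵀX + VΛVᵀ)⁻¹ XᵀX = V · diag( σ₁²/(σ₁²+λ₁), …, σ_n²/(σ_n²+λ_n) ) · Vᵀ. -/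
open Matrix

lemma sandwich_mul {n : ℕ} (V : Matrix (Fin n) (Fin n) ℝ) (hV : Vᵀ * V = 1)
    (f g : Fin n → ℝ) :
    (V * Matrix.diagonal f * Vᵀ) * (V * Matrix.diagonal g * Vᵀ)
      = V * Matrix.diagonal (fun i => f i * g i) * Vᵀ := by
  calc (V * Matrix.diagonal f * Vᵀ) * (V * Matrix.diagonal g * Vᵀ)
      = V * Matrix.diagonal f * (Vᵀ * V) * Matrix.diagonal g * Vᵀ := by
        noncomm_ring
    _ = V * Matrix.diagonal (fun i => f i * g i) * Vᵀ := by
        rw [hV, Matrix.mul_one, Matrix.mul_assoc V, Matrix.diagonal_mul_diagonal]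

/-- (Eigen Simplification) The generalized ridge regression solution
`(XᵀX + VΛVᵀ)⁻¹ XᵀX` scales each singular direction by `σᵢ²/(σᵢ² + λᵢ)`. -/
theorem eigen_simplification (m n : ℕ)
    (U : Matrix (Fin m) (Fin n) ℝ) (V : Matrix (Fin n) (Fin n) ℝ)
    (σ lam : Fin n → ℝ)
    (hU : Uᵀ * U = 1) (hV : Vᵀ * V = 1)
    (hσ : ∀ i, 0 ≤ σ i) (hlam : ∀ i, 0 < σ i ^ 2 + lam i)
    (X : Matrix (Fin m) (Fin n) ℝ) (hX : X = U * Matrix.diagonal σ * Vᵀ) :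
    IsUnit (Xᵀ * X + V * Matrix.diagonal lam * Vᵀ) ∧
      (Xᵀ * X + V * Matrix.diagonal lam * Vᵀ)⁻¹ * (Xᵀ * X)
        = V * Matrix.diagonal (fun i => σ i ^ 2 / (σ i ^ 2 + lam i)) * Vᵀ := by
  have hne : ∀ i, σ i ^ 2 + lam i ≠ 0 := fun i => (hlam i).ne'
  have hXtX : Xᵀ * X = V * Matrix.diagonal (fun i => σ i ^ 2) * Vᵀ := by
    subst hX
    simp only [Matrix.transpose_mul, Matrix.transpose_transpose,
      Matrix.diagonal_transpose, Matrix.mul_assoc]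
    rw [← Matrix.mul_assoc Uᵀ U, hU, Matrix.one_mul,
      ← Matrix.mul_assoc (Matrix.diagonal σ), Matrix.diagonal_mul_diagonal]
    have : (fun i => σ i * σ i) = fun i => σ i ^ 2 := by funext i; ring
    rw [this]
  have hA : Xᵀ * X + V * Matrix.diagonal lam * Vᵀ
      = V * Matrix.diagonal (fun i => σ i ^ 2 + lam i) * Vᵀ := by
    rw [hXtX, show Matrix.diagonal (fun i => σ i ^ 2 + lam i)
        = Matrix.diagonal (fun i => σ i ^ 2) + Matrix.diagonal lam from
      (Matrix.diagonal_add _ _).symm]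
    noncomm_ring
  set B := V * Matrix.diagonal (fun i => (σ i ^ 2 + lam i)⁻¹) * Vᵀ with hB
  have hone : ∀ f : Fin n → ℝ, (∀ i, f i = 1) →
      V * Matrix.diagonal f * Vᵀ = 1 := by
    intro f hf
    have : f = fun _ => (1 : ℝ) := funext hf
    rw [this, Matrix.diagonal_one, Matrix.mul_one]
    rwa [mul_eq_one_comm] at hV
  have hAB : (Xᵀ * X + V * Matrix.diagonal lam * Vᵀ) * B = 1 := by
    rw [hA, hB, sandwich_mul V hV]
    exact hone _ fun i => mul_inv_cancel₀ (hne i)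
  have hBA : B * (Xᵀ * X + V * Matrix.diagonal lam * Vᵀ) = 1 := by
    rw [hA, hB, sandwich_mul V hV]
    exact hone _ fun i => inv_mul_cancel₀ (hne i)
  refine ⟨IsUnit.of_mul_eq_one _ hAB, ?_⟩
  rw [Matrix.inv_eq_right_inv hAB, hXtX, hB, sandwich_mul V hV]
  have : (fun i => (σ i ^ 2 + lam i)⁻¹ * σ i ^ 2)
      = fun i => σ i ^ 2 / (σ i ^ 2 + lam i) := by
    funext i; rw [div_eq_inv_mul]
  rw [this]
end

section
/- Let m, n ≥ 1, let U ∈ ℝ^{m×n} have orthonormal columns (UᵀU = I_n), let V ∈ ℝ^{n×n} be orthogonal (VᵀV = I_n), let σ : Fin n → ℝ with σ_i > 0 for all i, and set X = U·diag(σ)·Vᵀ and X⁺ = V·diag(σ⁻¹)·Uᵀ. Fix λ' ∈ ℝ and k ≤ n, and let D be the diagonal matrix with D_ii = σ_i − λ' for i ≤ k and D_ii = 0 for i > k (so that PQᵀ := U·D·Vᵀ is the regularized-SVD matrix-factorization predictor with rank k). Then X⁺·(U·D·Vᵀ) = V·E·Vᵀ, where E is the diagonal matrix with E_ii = 1 −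 λ'/σ_i for i ≤ k and E_ii = 0 for i > k. -/
open Matrix

/-- The rank-`k` regularized-SVD matrix-factorization predictor, expressed as a
linear autoencoder via the Moore–Penrose inverse: `X⁺·(U D Vᵀ) = V E Vᵀ` with
`E_ii = 1 - λ'/σᵢ` for `i ≤ k` and `0` otherwise. -/
theorem matrix_factorization_as_linear_autoencoder (m n : ℕ)
    (U : Matrix (Fin m) (Fin n) ℝ) (V : Matrix (Fin n) (Fin n) ℝ)
    (σ : Fin n → ℝ) (hU : Uᵀ * U = 1) (hV : Vᵀ * V = 1) (hσ : ∀ i, 0 < σ i)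
    (lam' : ℝ) (k : ℕ) (hk : k ≤ n)
    (X : Matrix (Fin m) (Fin n) ℝ) (hX : X = U * Matrix.diagonal σ * Vᵀ)
    (Xplus : Matrix (Fin n) (Fin m) ℝ)
    (hXplus : Xplus = V * Matrix.diagonal (fun i => (σ i)⁻¹) * Uᵀ)
    (D : Matrix (Fin n) (Fin n) ℝ)
    (hD : D = Matrix.diagonal (fun i : Fin n => if (i : ℕ) < k then σ i - lam' else 0)) :
    Xplus * (U * D * Vᵀ)
      = V * Matrix.diagonal (fun i : Fin n => if (i : ℕ) < k then 1 - lam' / σ i else 0) * Vᵀ := by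
  subst hXplus hD
  have h1 : V * Matrix.diagonal (fun i => (σ i)⁻¹) * Uᵀ *
      (U * Matrix.diagonal (fun i : Fin n => if (i : ℕ) < k then σ i - lam' else 0) * Vᵀ)
      = V * (Matrix.diagonal (fun i => (σ i)⁻¹) *
        Matrix.diagonal (fun i : Fin n => if (i : ℕ) < k then σ i - lam' else 0)) * Vᵀ := by
    calc V * Matrix.diagonal (fun i => (σ i)⁻¹) * Uᵀ *
        (U * Matrix.diagonal (fun i : Fin n => if (i : ℕ) < k then σ i - lam' else 0) * Vᵀ)
        = V * Matrix.diagonal (fun i => (σ i)⁻¹) * (Uᵀ * U) *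
          Matrix.diagonal (fun i : Fin n => if (i : ℕ) < k then σ i - lam' else 0) * Vᵀ := by
          simp only [Matrix.mul_assoc]
      _ = _ := by rw [hU]; simp only [Matrix.mul_one, Matrix.mul_assoc]
  rw [h1, Matrix.diagonal_mul_diagonal]
  have hfun : (fun i : Fin n => (σ i)⁻¹ * (if (i : ℕ) < k then σ i - lam' else 0))
      = fun i : Fin n => if (i : ℕ) < k then 1 - lam' / σ i else 0 := by
    funext i
    by_cases h : (i : ℕ) < k
    · simp only [h, if_true]
      rw [mul_sub, inv_mul_cancel₀ (hσ i).ne', inv_mul_eq_div]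
    · simp [h]
  rw [hfun]
end

section
/- (Debiased EASE equals EASE) Let X ∈ ℝ^{m×n}, λ ∈ ℝ, and α < 1. Consider the constraint set 𝒞 = { W ∈ ℝ^{n×n} : diag(W) = 0 }. Then W₀ ∈ 𝒞 minimizes the debiased EASE objective F(W) = ‖X − XW‖²_F − α‖XW‖²_F + λ‖W‖²_F over 𝒞 if and only if (1−α)·W₀ minimizes the EASE objective G(W') = ‖X − XW'‖²_F + (λ/(1−α))·‖W'‖²_F over 𝒞. In particular, the debiased EASE loss with parameters (α, λ) has the same minimizers, up to the constant factor 1/(1−α), as the original EASE loss with parameter λ' = λ/(1−α). -/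
open Matrix

/-- Squared Frobenius norm of a matrix. -/
def frobSq {m n : Type*} [Fintype m] [Fintype n] (A : Matrix m n ℝ) : ℝ :=
  ∑ i, ∑ j, (A i j) ^ 2

lemma frobSq_sub_smul {m n : ℕ} (A B : Matrix (Fin m) (Fin n) ℝ) (c : ℝ) :
    frobSq (A - c • B) =
      frobSq A - 2 * c * (∑ i, ∑ j, A i j * B i j) + c ^ 2 * frobSq B := by
  simp only [frobSq, Matrix.sub_apply, Matrix.smul_apply, smul_eq_mul]
  rw [Finset.mul_sum, Finset.mul_sum, ← Finset.sum_sub_distrib, ← Finset.sum_add_distrib]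
  refine Finset.sum_congr rfl fun i _ => ?_
  rw [Finset.mul_sum, Finset.mul_sum, ← Finset.sum_sub_distrib, ← Finset.sum_add_distrib]
  exact Finset.sum_congr rfl fun j _ => by ring

lemma frobSq_smul {n : ℕ} (W : Matrix (Fin n) (Fin n) ℝ) (c : ℝ) :
    frobSq (c • W) = c ^ 2 * frobSq W := by
  simp only [frobSq, Matrix.smul_apply, smul_eq_mul, mul_pow, Finset.mul_sum]

/-- (Debiased EASE equals EASE) `W₀` minimizes the debiased EASE objective over
zero-diagonal matrices iff `(1-α)·W₀` minimizes the EASE objective with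
regularization weight `λ/(1-α)` over zero-diagonal matrices. -/
theorem debiased_ease_iff_ease (m n : ℕ)
    (X : Matrix (Fin m) (Fin n) ℝ) (lam α : ℝ) (hα : α < 1)
    (W₀ : Matrix (Fin n) (Fin n) ℝ) (hW₀ : ∀ i, W₀ i i = 0) :
    (∀ W : Matrix (Fin n) (Fin n) ℝ, (∀ i, W i i = 0) →
        frobSq (X - X * W₀) - α * frobSq (X * W₀) + lam * frobSq W₀ ≤
          frobSq (X - X * W) - α * frobSq (X * W) + lam * frobSq W) ↔
      (∀ W' : Matrix (Fin n) (Fin n) ℝ, (∀ i, W' i i = 0) →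
        frobSq (X - X * ((1 - α) • W₀)) + (lam / (1 - α)) * frobSq ((1 - α) • W₀) ≤
          frobSq (X - X * W') + (lam / (1 - α)) * frobSq W') := by
  have hc : (0:ℝ) < 1 - α := by linarith
  have hc0 : (1 - α : ℝ) ≠ 0 := ne_of_gt hc
  -- key identity: G((1-α)•W) = (1-α) * F(W) + α * frobSq X
  have key : ∀ W : Matrix (Fin n) (Fin n) ℝ,
      frobSq (X - X * ((1 - α) • W)) + (lam / (1 - α)) * frobSq ((1 - α) • W)
        = (1 - α) * (frobSq (X - X * W) - α * frobSq (X * W) + lam * frobSq W)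
          + α * frobSq X := by
    intro W
    have h1 : X * ((1 - α) • W) = (1 - α) • (X * W) := by
      rw [Matrix.mul_smul]
    have h2 : X - X * W = X - (1:ℝ) • (X * W) := by simp
    rw [h1, h2, frobSq_sub_smul, frobSq_sub_smul, frobSq_smul]
    field_simp
    ring
  constructor
  · intro h W' hW'
    have hW : ∀ i, ((1 - α)⁻¹ • W') i i = 0 := fun i => by
      simp [hW' i]
    have hrec : (1 - α) • ((1 - α)⁻¹ • W') = W' := by
      rw [smul_smul, mul_inv_cancel₀ hc0, one_smul]
    have := h ((1 - α)⁻¹ • W') hW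
    have k1 := key W₀
    have k2 := key ((1 - α)⁻¹ • W')
    rw [hrec] at k2
    rw [k1, k2]
    nlinarith [this]
  · intro h W hW
    have hW' : ∀ i, ((1 - α) • W) i i = 0 := fun i => by simp [hW i]
    have := h ((1 - α) • W) hW'
    rw [key W₀, key W] at this
    nlinarith [this]
end

section
/- (Closed form of debiased EASE) Let X ∈ ℝ^{m×n}, λ > 0 and 0 ≤ α < 1. Set P̂ = (XᵀX + (λ/(1−α))·I)⁻¹ (which exists and is positive definite, so its diagonal entries are positive), and define Ŵ = (1/(1−α))·( I − P̂·dMat( 1 ⊘ diag(P̂) ) ), where diag(P̂) is the vector of diagonal entries of P̂, ⊘ is elementwise division of the all-ones vector, and dMat turns a vector into a diagonal matrix. Then diag(Ŵ) = 0, and Ŵ minimizes ‖X − XW‖²_F − α‖XW‖²_F + λ‖W‖²_F over all W ∈ ℝ^{n×n} with diag(W) = 0. -/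
open Matrix

lemma trace_tr_mul_mul_nonneg {n : Type*} [Fintype n] {A : Matrix n n ℝ}
    (hA : A.PosSemidef) (E : Matrix n n ℝ) : 0 ≤ (Eᵀ * A * E).trace := by
  rw [Matrix.trace]
  refine Finset.sum_nonneg fun j _ => ?_
  have h := hA.dotProduct_mulVec_nonneg (fun i => E i j)
  simp only [Matrix.diag, Matrix.mul_apply, Matrix.transpose_apply, Finset.sum_mul]
  simp only [dotProduct, Matrix.mulVec, dotProduct, Pi.star_apply,
    star_trivial, Finset.mul_sum] at h
  rw [Finset.sum_comm]
  calc (0:ℝ) ≤ _ := h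
  _ = _ := by
    refine Finset.sum_congr rfl fun x _ => Finset.sum_congr rfl fun y _ => by ring

lemma frobSq_eq_trace {k l : Type*} [Fintype k] [Fintype l] (A : Matrix k l ℝ) :
    frobSq A = (Aᵀ * A).trace := by
  rw [frobSq, Matrix.trace]
  rw [Finset.sum_comm]
  simp [Matrix.diag, Matrix.mul_apply, sq]

/-- (Closed form of debiased EASE) With `P̂ = (XᵀX + (λ/(1-α))I)⁻¹` (a positive
definite matrix), the matrix `Ŵ = (1/(1-α))·(I - P̂·dMat(1 ⊘ diag P̂))` has zero
diagonal and minimizes the debiased EASE objective over zero-diagonal matrices. -/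
theorem debiased_ease_closed_form (m n : ℕ)
    (X : Matrix (Fin m) (Fin n) ℝ) (lam α : ℝ)
    (hlam : 0 < lam) (hα0 : 0 ≤ α) (hα1 : α < 1)
    (P : Matrix (Fin n) (Fin n) ℝ)
    (hP : P = (Xᵀ * X + (lam / (1 - α)) • (1 : Matrix (Fin n) (Fin n) ℝ))⁻¹)
    (W : Matrix (Fin n) (Fin n) ℝ)
    (hW : W = (1 / (1 - α)) •
      ((1 : Matrix (Fin n) (Fin n) ℝ) - P * Matrix.diagonal fun i => 1 / P i i)) :
    P.PosDef ∧ (∀ i, W i i = 0) ∧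
      (∀ W' : Matrix (Fin n) (Fin n) ℝ, (∀ i, W' i i = 0) →
        frobSq (X - X * W) - α * frobSq (X * W) + lam * frobSq W ≤
          frobSq (X - X * W') - α * frobSq (X * W') + lam * frobSq W') := by
  have hβ : (0:ℝ) < 1 - α := by linarith
  set c : ℝ := lam / (1 - α) with hc_def
  have hc : 0 < c := div_pos hlam hβ
  set A : Matrix (Fin n) (Fin n) ℝ := Xᵀ * X + c • 1 with hA_def
  have h1 : (Xᵀ * X).PosSemidef := by
    simpa [Matrix.conjTranspose_eq_transpose_of_trivial] using
      Matrix.posSemidef_conjTranspose_mul_self X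
  have h2 : (c • (1 : Matrix (Fin n) (Fin n) ℝ)).PosDef := by
    rw [Matrix.smul_one_eq_diagonal]
    exact Matrix.posDef_diagonal_iff.mpr fun _ => hc
  have hA : A.PosDef := Matrix.PosDef.posSemidef_add h1 h2
  have hPd : P.PosDef := hP ▸ hA.inv
  have hAP : A * P = 1 := by
    rw [hP]; exact Matrix.mul_nonsing_inv _ (isUnit_iff_ne_zero.mpr hA.det_pos.ne')
  have hAsym : Aᵀ = A := by
    have := hA.isHermitian
    rwa [Matrix.IsHermitian, Matrix.conjTranspose_eq_transpose_of_trivial] at this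
  have hPii : ∀ i, 0 < P i i := by
    intro i
    have h := hPd.dotProduct_mulVec_pos (x := Pi.single i 1) (by
      intro h; have := congrFun h i; simp at this)
    simpa [Matrix.mulVec, dotProduct, Pi.single_apply] using h
  set D : Matrix (Fin n) (Fin n) ℝ := Matrix.diagonal (fun i => 1 / P i i) with hD_def
  have hWd : ∀ i, W i i = 0 := by
    intro i
    have hPD : (P * D) i i = 1 := by
      rw [hD_def, Matrix.mul_diagonal, mul_one_div, div_self (hPii i).ne']
    rw [hW]
    simp [Matrix.smul_apply, Matrix.sub_apply, hPD]
  have hsmulW : (1 - α) • W = 1 - P * D := by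
    rw [hW, smul_smul, mul_one_div, div_self hβ.ne', one_smul]
  have hAW : A * ((1 - α) • W) = A - D := by
    rw [hsmulW, Matrix.mul_sub, Matrix.mul_one, ← Matrix.mul_assoc, hAP, Matrix.one_mul]
  -- representation of the objective on zero-diagonal matrices
  have key : ∀ Z : Matrix (Fin n) (Fin n) ℝ, (∀ i, Z i i = 0) →
      frobSq (X - X * Z) - α * frobSq (X * Z) + lam * frobSq Z =
        (Xᵀ * X).trace - 2 * (A * Z).trace + (1 - α) * (Zᵀ * A * Z).trace := by
    intro Z hZ
    have htrZ : Z.trace = 0 := by simp [Matrix.trace, Matrix.diag, hZ]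
    have hcross : (Zᵀ * (Xᵀ * X)).trace = (Xᵀ * X * Z).trace := by
      rw [← Matrix.trace_transpose (Xᵀ * X * Z)]
      simp [Matrix.transpose_mul, Matrix.mul_assoc]
    have hAZ : (A * Z).trace = (Xᵀ * X * Z).trace := by
      rw [hA_def, Matrix.add_mul, Matrix.trace_add, Matrix.smul_mul, Matrix.one_mul,
        Matrix.trace_smul, htrZ]
      simp
    have hQZ : (Zᵀ * A * Z).trace
        = (Zᵀ * (Xᵀ * X) * Z).trace + c * (Zᵀ * Z).trace := by
      rw [hA_def, Matrix.mul_add, Matrix.add_mul, Matrix.trace_add, Matrix.mul_smul,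
        Matrix.smul_mul, Matrix.trace_smul, Matrix.mul_one]
      simp
    rw [frobSq_eq_trace, frobSq_eq_trace, frobSq_eq_trace]
    rw [Matrix.transpose_sub, Matrix.sub_mul, Matrix.mul_sub, Matrix.mul_sub,
      Matrix.transpose_mul, Matrix.trace_sub, Matrix.trace_sub, Matrix.trace_sub]
    rw [hAZ, hQZ]
    have e1 : (Zᵀ * Xᵀ * X).trace = (Xᵀ * X * Z).trace := by
      rw [Matrix.mul_assoc]; exact hcross
    have e2 : (Zᵀ * Xᵀ * (X * Z)).trace = (Zᵀ * (Xᵀ * X) * Z).trace := by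
      rw [Matrix.mul_assoc, Matrix.mul_assoc, Matrix.mul_assoc]
    have e3 : (Xᵀ * (X * Z)).trace = (Xᵀ * X * Z).trace := by rw [Matrix.mul_assoc]
    rw [e1, e2, e3]
    have hcβ : (1 - α) * c = lam := by
      rw [hc_def]; field_simp
    rw [← hcβ]; ring
  -- stationarity
  have stat : ∀ Z : Matrix (Fin n) (Fin n) ℝ, (∀ i, Z i i = 0) →
      (1 - α) * (Zᵀ * A * W).trace = (A * Z).trace := by
    intro Z hZ
    have h1' : (1 - α) * (Zᵀ * A * W).trace = (Zᵀ * (A * ((1 - α) • W))).trace := by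
      rw [Matrix.mul_smul, Matrix.mul_smul, Matrix.trace_smul, smul_eq_mul,
        Matrix.mul_assoc]
    rw [h1', hAW, Matrix.mul_sub, Matrix.trace_sub]
    have hZD : (Zᵀ * D).trace = 0 := by
      simp [Matrix.trace, Matrix.diag, hD_def, Matrix.mul_diagonal, hZ]
    have hZA : (Zᵀ * A).trace = (A * Z).trace := by
      rw [← Matrix.trace_transpose (Zᵀ * A), Matrix.transpose_mul,
        Matrix.transpose_transpose, hAsym]
    rw [hZD, hZA, sub_zero]
  refine ⟨hPd, hWd, ?_⟩
  intro W' hW'd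
  have hcross2 : (Wᵀ * A * W').trace = (W'ᵀ * A * W).trace := by
    rw [← Matrix.trace_transpose (Wᵀ * A * W'), Matrix.transpose_mul,
      Matrix.transpose_mul, Matrix.transpose_transpose, hAsym, Matrix.mul_assoc]
  have hE : ((W' - W)ᵀ * A * (W' - W)).trace
      = (W'ᵀ * A * W').trace - 2 * (W'ᵀ * A * W).trace + (Wᵀ * A * W).trace := by
    rw [Matrix.transpose_sub, Matrix.sub_mul, Matrix.sub_mul, Matrix.mul_sub,
      Matrix.mul_sub, Matrix.trace_sub, Matrix.trace_sub, Matrix.trace_sub, hcross2]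
    ring
  have hnn : 0 ≤ ((W' - W)ᵀ * A * (W' - W)).trace :=
    trace_tr_mul_mul_nonneg hA.posSemidef _
  have hnn2 : 0 ≤ (1 - α) * ((W' - W)ᵀ * A * (W' - W)).trace :=
    mul_nonneg hβ.le hnn
  rw [key W hWd, key W' hW'd]
  have s1 := stat W hWd
  have s2 := stat W' hW'd
  nlinarith [hE, hnn2, s1, s2]
end

section
/- (Debiased iALS update equals a rescaled iALS update) Let A, B ∈ ℝ^{k×k} be symmetric positive semidefinite matrices, let c > 0, 0 < α₀ < 1, λ > 0, and let v ∈ ℝ^k. Set α₀' = α₀/((1−α₀)c) and λ' = λ/((1−α₀)c). Then both c(1−α₀)A + α₀B + λI and A + α₀'B + λ'I are invertible, and ( c(1−α₀)A + α₀B + λI )⁻¹ · (√c · v) = (1/(√c·(1−α₀))) · ( A + α₀'B + λ'I )⁻¹ · v. -/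
open Matrix

lemma posSemidef_smul_of_nonneg {k : ℕ} {A : Matrix (Fin k) (Fin k) ℝ}
    (hA : A.PosSemidef) {r : ℝ} (hr : 0 ≤ r) : (r • A).PosSemidef := by
  refine ⟨?_, fun x => ?_⟩
  · unfold Matrix.IsHermitian
    rw [conjTranspose_smul, hA.1.eq]
    simp
  · exact (hA.smul hr).2 x

lemma posDef_smul_one {k : ℕ} {r : ℝ} (hr : 0 < r) :
    (r • (1 : Matrix (Fin k) (Fin k) ℝ)).PosDef := by
  refine ⟨?_, fun x hx => ?_⟩
  · unfold Matrix.IsHermitian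
    rw [conjTranspose_smul, conjTranspose_one]
    simp
  · exact ((Matrix.PosDef.one (n := Fin k) (R := ℝ)).smul hr).2 hx

/-- (Debiased iALS update equals a rescaled iALS update) The closed-form
alternating-least-squares update of the debiased iALS loss coincides, up to the
constant factor `1/(√c·(1-α₀))`, with the original iALS update with rescaled
parameters `α₀' = α₀/((1-α₀)c)` and `λ' = λ/((1-α₀)c)`. -/
theorem debiased_ials_update_eq_rescaled_ials_update (k : ℕ)
    (A B : Matrix (Fin k) (Fin k) ℝ) (hA : A.PosSemidef) (hB : B.PosSemidef)
    (c α₀ lam : ℝ) (hc : 0 < c) (hα₀ : 0 < α₀) (hα₁ : α₀ < 1) (hlam : 0 < lam)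
    (v : Fin k → ℝ) :
    IsUnit ((c * (1 - α₀)) • A + α₀ • B + lam • (1 : Matrix (Fin k) (Fin k) ℝ)) ∧
    IsUnit (A + (α₀ / ((1 - α₀) * c)) • B +
      (lam / ((1 - α₀) * c)) • (1 : Matrix (Fin k) (Fin k) ℝ)) ∧
    ((c * (1 - α₀)) • A + α₀ • B + lam • (1 : Matrix (Fin k) (Fin k) ℝ))⁻¹ *ᵥ
        (Real.sqrt c • v)
      = (1 / (Real.sqrt c * (1 - α₀))) •
          ((A + (α₀ / ((1 - α₀) * c)) • B +
            (lam / ((1 - α₀) * c)) • (1 : Matrix (Fin k) (Fin k) ℝ))⁻¹ *ᵥ v) := by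
  have h1α : (0:ℝ) < 1 - α₀ := by linarith
  set M := (c * (1 - α₀)) • A + α₀ • B + lam • (1 : Matrix (Fin k) (Fin k) ℝ) with hM
  set N := A + (α₀ / ((1 - α₀) * c)) • B +
      (lam / ((1 - α₀) * c)) • (1 : Matrix (Fin k) (Fin k) ℝ) with hN
  have hMpd : M.PosDef :=
    Matrix.PosDef.posSemidef_add
      ((posSemidef_smul_of_nonneg hA (by positivity)).add
        (posSemidef_smul_of_nonneg hB hα₀.le)) (posDef_smul_one hlam)
  have hNpd : N.PosDef :=
    Matrix.PosDef.posSemidef_add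
      (hA.add (posSemidef_smul_of_nonneg hB (by positivity)))
      (posDef_smul_one (by positivity))
  refine ⟨hMpd.isUnit, hNpd.isUnit, ?_⟩
  have hs : ((1 - α₀) * c) ≠ 0 := by positivity
  have e1 : ((1 - α₀) * c)⁻¹ * (c * (1 - α₀)) = 1 := by
    rw [mul_comm c]; exact inv_mul_cancel₀ hs
  have hNM : N = ((1 - α₀) * c)⁻¹ • M := by
    rw [hN, hM, smul_add, smul_add, smul_smul, smul_smul, smul_smul, e1, one_smul,
      div_eq_inv_mul, div_eq_inv_mul]
  haveI : Invertible (((1 - α₀) * c)⁻¹) := invertibleOfNonzero (inv_ne_zero hs)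
  have hNinv : N⁻¹ = ((1 - α₀) * c) • M⁻¹ := by
    rw [hNM, Matrix.inv_smul (A := M) (((1 - α₀) * c)⁻¹) ((Matrix.isUnit_iff_isUnit_det _).1 hMpd.isUnit),
      invOf_eq_inv, inv_inv]
  rw [hNinv, mulVec_smul, smul_mulVec, smul_smul]
  congr 1
  have hsq : Real.sqrt c * Real.sqrt c = c := Real.mul_self_sqrt hc.le
  have hsqpos : (0:ℝ) < Real.sqrt c := Real.sqrt_pos.mpr hc
  field_simp
  nlinarith [hsq]
end

section
/- (Closed form of the debiased iALS user step) Let H_S ∈ ℝ^{k×s}, H ∈ ℝ^{k×m}, y ∈ ℝ^s, c > 0, 0 ≤ α₀ < 1 and λ > 0. Define the debiased user objective L(w) = c·‖H_Sᵀw − y‖² + α₀·‖Hᵀw‖² + λ·‖w‖² − c·α₀·‖H_Sᵀw‖² for w ∈ ℝ^k. Then the matrix M = c(1−α₀)·H_SH_Sᵀ + α₀·HHᵀ + λ·I is positive definite (hence invertible), and w* = M⁻¹·(c·H_S y) is the unique minimizer of L: L(w*) ≤ L(w) for all w ∈ ℝ^k, with equality only for w = w*. -/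
open Matrix

/-- Squared Euclidean norm of a vector. -/
def sqnorm {ι : Type*} [Fintype ι] (v : ι → ℝ) : ℝ := ∑ i, (v i) ^ 2

lemma sqnorm_eq_dot {ι : Type*} [Fintype ι] (v : ι → ℝ) : sqnorm v = v ⬝ᵥ v := by
  simp [sqnorm, dotProduct, sq]

lemma dot_self_nonneg {ι : Type*} [Fintype ι] (v : ι → ℝ) : 0 ≤ v ⬝ᵥ v :=
  Finset.sum_nonneg fun i _ => mul_self_nonneg _

lemma dot_self_pos {ι : Type*} [Fintype ι] {v : ι → ℝ} (hv : v ≠ 0) : 0 < v ⬝ᵥ v := by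
  obtain ⟨i, hi⟩ := Function.ne_iff.mp hv
  exact Finset.sum_pos' (fun j _ => mul_self_nonneg _)
    ⟨i, Finset.mem_univ i, mul_self_pos.mpr (by simpa using hi)⟩

lemma dot_self_mul_transpose {k n : ℕ} (A : Matrix (Fin k) (Fin n) ℝ) (x : Fin k → ℝ) :
    x ⬝ᵥ ((A * Aᵀ) *ᵥ x) = (Aᵀ *ᵥ x) ⬝ᵥ (Aᵀ *ᵥ x) := by
  rw [← mulVec_mulVec, dotProduct_mulVec, ← mulVec_transpose]

/-- (Closed form of the debiased iALS user step) The matrix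
`M = c(1-α₀)H_SH_Sᵀ + α₀HHᵀ + λI` is positive definite and
`wstar = M⁻¹·(c·H_S y)` is the unique minimizer of the debiased per-user loss. -/
theorem debiased_ials_user_step_closed_form (k s m : ℕ)
    (HS : Matrix (Fin k) (Fin s) ℝ) (H : Matrix (Fin k) (Fin m) ℝ)
    (y : Fin s → ℝ) (c α₀ lam : ℝ)
    (hc : 0 < c) (hα0 : 0 ≤ α₀) (hα1 : α₀ < 1) (hlam : 0 < lam)
    (L : (Fin k → ℝ) → ℝ)
    (hL : ∀ w, L w = c * sqnorm (HSᵀ *ᵥ w - y) + α₀ * sqnorm (Hᵀ *ᵥ w)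
      + lam * sqnorm w - c * α₀ * sqnorm (HSᵀ *ᵥ w))
    (M : Matrix (Fin k) (Fin k) ℝ)
    (hM : M = (c * (1 - α₀)) • (HS * HSᵀ) + α₀ • (H * Hᵀ)
      + lam • (1 : Matrix (Fin k) (Fin k) ℝ))
    (wstar : Fin k → ℝ) (hw : wstar = M⁻¹ *ᵥ (c • (HS *ᵥ y))) :
    M.PosDef ∧ (∀ w, L wstar ≤ L w) ∧ (∀ w, L w = L wstar → w = wstar) := by
  have hsym : Mᵀ = M := by
    rw [hM]
    simp [Matrix.transpose_add, Matrix.transpose_smul, Matrix.transpose_mul,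
      Matrix.transpose_transpose, Matrix.transpose_one]
  have hq : ∀ x : Fin k → ℝ, x ⬝ᵥ (M *ᵥ x)
      = c * (1 - α₀) * ((HSᵀ *ᵥ x) ⬝ᵥ (HSᵀ *ᵥ x)) + α₀ * ((Hᵀ *ᵥ x) ⬝ᵥ (Hᵀ *ᵥ x))
        + lam * (x ⬝ᵥ x) := by
    intro x
    rw [hM]
    simp [Matrix.add_mulVec, Matrix.smul_mulVec, dotProduct_add, dotProduct_smul,
      Matrix.one_mulVec, dot_self_mul_transpose, smul_eq_mul]
  have hpd : M.PosDef := by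
    refine Matrix.PosDef.of_dotProduct_mulVec_pos ?_ ?_
    · rw [Matrix.IsHermitian, conjTranspose_eq_transpose_of_trivial, hsym]
    · intro x hx
      have hx' : star x = x := by funext i; simp
      rw [hx', hq]
      have h1 : 0 ≤ c * (1 - α₀) * ((HSᵀ *ᵥ x) ⬝ᵥ (HSᵀ *ᵥ x)) :=
        mul_nonneg (by nlinarith) (dot_self_nonneg _)
      have h2 : 0 ≤ α₀ * ((Hᵀ *ᵥ x) ⬝ᵥ (Hᵀ *ᵥ x)) := mul_nonneg hα0 (dot_self_nonneg _)
      have h3 : 0 < lam * (x ⬝ᵥ x) := mul_pos hlam (dot_self_pos hx)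
      linarith
  have hdet : IsUnit M.det := hpd.det_pos.ne'.isUnit
  set b : Fin k → ℝ := c • (HS *ᵥ y) with hb
  have hMw : M *ᵥ wstar = b := by
    rw [hw, Matrix.mulVec_mulVec, Matrix.mul_nonsing_inv _ hdet, Matrix.one_mulVec]
  have hLq : ∀ w, L w = w ⬝ᵥ (M *ᵥ w) - 2 * (b ⬝ᵥ w) + c * (y ⬝ᵥ y) := by
    intro w
    rw [hL w, sqnorm_eq_dot, sqnorm_eq_dot, sqnorm_eq_dot, sqnorm_eq_dot, hq]
    have h1 : (HSᵀ *ᵥ w - y) ⬝ᵥ (HSᵀ *ᵥ w - y)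
        = (HSᵀ *ᵥ w) ⬝ᵥ (HSᵀ *ᵥ w) - 2 * (y ⬝ᵥ (HSᵀ *ᵥ w)) + y ⬝ᵥ y := by
      rw [sub_dotProduct, dotProduct_sub, dotProduct_sub,
        dotProduct_comm (HSᵀ *ᵥ w) y]
      ring
    have h2 : b ⬝ᵥ w = c * (y ⬝ᵥ (HSᵀ *ᵥ w)) := by
      rw [hb, smul_dotProduct, dotProduct_mulVec y HSᵀ w, vecMul_transpose, smul_eq_mul]
    rw [h1, h2]
    ring
  have hsymdot : ∀ u v : Fin k → ℝ, u ⬝ᵥ (M *ᵥ v) = v ⬝ᵥ (M *ᵥ u) := by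
    intro u v
    rw [dotProduct_mulVec, ← mulVec_transpose, hsym, dotProduct_comm]
  have key : ∀ w, L w - L wstar = (w - wstar) ⬝ᵥ (M *ᵥ (w - wstar)) := by
    intro w
    have e2 : w ⬝ᵥ (M *ᵥ wstar) = b ⬝ᵥ w := by rw [hMw, dotProduct_comm]
    have e1 : wstar ⬝ᵥ (M *ᵥ w) = b ⬝ᵥ w := (hsymdot wstar w).trans e2
    have e3 : wstar ⬝ᵥ (M *ᵥ wstar) = b ⬝ᵥ wstar := by rw [hMw, dotProduct_comm]
    rw [hLq w, hLq wstar, Matrix.mulVec_sub, dotProduct_sub, sub_dotProduct,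
      sub_dotProduct, e1, e2, e3]
    ring
  refine ⟨hpd, ?_, ?_⟩
  · intro w
    by_cases hwe : w = wstar
    · rw [hwe]
    · have hne : w - wstar ≠ 0 := sub_ne_zero.mpr hwe
      have := hpd.dotProduct_mulVec_pos hne
      have hst : star (w - wstar) = w - wstar := by funext i; simp
      rw [hst] at this
      have := key w
      linarith
  · intro w hEq
    by_contra hwe
    have hne : w - wstar ≠ 0 := sub_ne_zero.mpr hwe
    have hpos := hpd.dotProduct_mulVec_pos hne
    have hst : star (w - wstar) = w - wstar := by funext i; simp
    rw [hst] at hpos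
    have := key w
    rw [hEq] at this
    simp only [sub_self] at this
    linarith
end

section
/- (Jensen lower bound shared by InfoNCE, MINE and BPR) Let N ≥ 1 be an integer and x : Fin N → ℝ. Then log( 1 + ∑_{j=1}^{N} exp(x_j) ) ≥ (1/N) ∑_{j=1}^{N} log( 1 + N·exp(x_j) ) ≥ (1/N) ∑_{j=1}^{N} x_j + log N. -/
open Real Finset

/-- (Jensen lower bound shared by InfoNCE, MINE and BPR) The per-example
InfoNCE loss `log(1 + ∑_j exp(x_j))` is bounded below by
`(1/N)∑_j log(1 + N·exp(x_j))`, which in turn is bounded below by the average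
score difference `(1/N)∑_j x_j` plus `log N`. -/
theorem infonce_jensen_lower_bound (N : ℕ) (hN : 1 ≤ N) (x : Fin N → ℝ) :
    Real.log (1 + ∑ j, Real.exp (x j))
        ≥ (1 / (N : ℝ)) * ∑ j, Real.log (1 + (N : ℝ) * Real.exp (x j)) ∧
      (1 / (N : ℝ)) * ∑ j, Real.log (1 + (N : ℝ) * Real.exp (x j))
        ≥ (1 / (N : ℝ)) * ∑ j, x j + Real.log N := by
  have hN0 : (0 : ℝ) < N := by exact_mod_cast hN
  constructor
  · have h := StrictConcaveOn.concaveOn strictConcaveOn_log_Ioi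
      |>.le_map_sum (t := Finset.univ) (w := fun _ : Fin N => 1 / (N : ℝ))
      (p := fun j => 1 + (N : ℝ) * Real.exp (x j))
      (fun i _ => by positivity)
      (by simp [Finset.sum_const]; field_simp)
      (fun i _ => by have := Real.exp_pos (x i); simp [Set.mem_Ioi]; positivity)
    have heq : ∑ j : Fin N, (1 / (N : ℝ)) • (1 + (N : ℝ) * Real.exp (x j))
        = 1 + ∑ j, Real.exp (x j) := by
      simp only [smul_eq_mul, mul_add, Finset.sum_add_distrib, Finset.sum_const,
        Finset.card_univ, Fintype.card_fin, nsmul_eq_mul]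
      rw [← Finset.mul_sum]
      field_simp
      rw [mul_add, mul_one]
      rw [Finset.mul_sum]
    rw [heq] at h
    rw [ge_iff_le, Finset.mul_sum]
    simpa [smul_eq_mul] using h
  · rw [ge_iff_le, ← sub_nonneg]
    have key : ∀ j : Fin N, x j + Real.log N ≤ Real.log (1 + (N : ℝ) * Real.exp (x j)) := by
      intro j
      have h1 : Real.log ((N : ℝ) * Real.exp (x j)) = x j + Real.log N := by
        rw [Real.log_mul (ne_of_gt hN0) (Real.exp_ne_zero _), Real.log_exp]; ring
      rw [← h1]
      apply Real.log_le_log (by positivity)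
      have := Real.exp_pos (x j); linarith
    have hsum : ∑ j, (x j + Real.log N) ≤ ∑ j, Real.log (1 + (N : ℝ) * Real.exp (x j)) :=
      Finset.sum_le_sum fun j _ => key j
    have hsum' : ∑ j : Fin N, (x j + Real.log N) = (∑ j, x j) + N * Real.log N := by
      simp [Finset.sum_add_distrib, Finset.card_univ, mul_comm]
    rw [hsum'] at hsum
    have : (1 / (N : ℝ)) * ((∑ j, x j) + N * Real.log N)
        ≤ (1 / (N : ℝ)) * ∑ j, Real.log (1 + (N : ℝ) * Real.exp (x j)) := by
      apply mul_le_mul_of_nonneg_left hsum (by positivity)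
    have heq2 : (1 / (N : ℝ)) * ((∑ j, x j) + N * Real.log N)
        = (1 / (N : ℝ)) * ∑ j, x j + Real.log N := by field_simp
    linarith [this, heq2 ▸ this]
end
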